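/- Let S = ℤ[K] for the Klein bottle group K, and let V = {v ∈ S : (x³ − x − 1)v ∈ (y − x⁻¹)S}, a right S-submodule of S. Then V ⊕ S ≅ S² as right S-modules, i.e., V is stably free of rank 1. -/

import Mathlib

/-- The single Klein bottle relator `y⁻¹xyx`. -/
def kleinRels : Set (FreeGroup (Fin 2)) :=
  {(FreeGroup.of 1)⁻¹ * FreeGroup.of 0 * FreeGroup.of 1 * FreeGroup.of 0}

/-- The Klein bottle group `⟨x, y | y⁻¹xyx⟩`. -/
abbrev KleinGroup := PresentedGroup kleinRels

/-- The integral group ring `ℤ[K]` of the Klein bottle group, whose right-module structure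
over itself is encoded as a module structure over the opposite ring `Sᵐᵒᵖ`. -/
abbrev S := MonoidAlgebra ℤ KleinGroup

noncomputable def X : S := MonoidAlgebra.of ℤ KleinGroup (PresentedGroup.of 0)
noncomputable def Y : S := MonoidAlgebra.of ℤ KleinGroup (PresentedGroup.of 1)
noncomputable def Xi : S := MonoidAlgebra.of ℤ KleinGroup (PresentedGroup.of 0)⁻¹

/-- The right `S`-submodule `V = {v ∈ S : (x³ - x - 1)v ∈ (y - x⁻¹)S}`. -/
noncomputable def V : Submodule Sᵐᵒᵖ S where
  carrier := {v : S | ∃ w : S, (X ^ 3 - X - 1) * v = (Y - Xi) * w}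
  add_mem' := by
    rintro v₁ v₂ ⟨w₁, h₁⟩ ⟨w₂, h₂⟩
    exact ⟨w₁ + w₂, by rw [mul_add, mul_add, h₁, h₂]⟩
  zero_mem' := ⟨0, by simp⟩
  smul_mem' := by
    rintro m v ⟨w, h⟩
    exact ⟨w * m.unop, by
      rw [MulOpposite.smul_eq_mul_unop, ← mul_assoc, h, mul_assoc]⟩

/-!
Left multiplication gives a right-linear map `ψ : S² → S`, `ψ(u, v) = (y - x⁻¹)u + (x³ - x - 1)v`.
Since `x(y - x⁻¹) = xy - 1` and `xy` has infinite order (it maps to a generator under `K → ℤ`,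
`x ↦ 0`, `y ↦ 1`), `y - x⁻¹` is a left non-zero-divisor: a nonzero `u` with `xy·u = u` would have
a support invariant under translation by `xy`, hence infinite. Therefore `(u, v) ↦ v` identifies
`ker ψ` with `V`. An explicit Bézout identity `(y - x⁻¹)A + (x³ - x - 1)B = 1` gives a section of
`ψ`, so `S² ≅ ker ψ ⊕ S ≅ V ⊕ S`.
-/

namespace MonoidAlgebra

variable {k G : Type*} [Group G]

theorem eq_zero_of_of_mul_eq_self [Semiring k] {g : G} (hg : ¬IsOfFinOrder g)
    {u : MonoidAlgebra k G} (hu : of k G g * u = u) : u = 0 := by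
  by_contra hu0
  obtain ⟨z, hz⟩ : u.coeff.support.Nonempty := by
    rwa [Finsupp.support_nonempty_iff, Ne, MonoidAlgebra.coeff_eq_zero]
  have hstep (w : G) : u.coeff (g⁻¹ * w) = u.coeff w := by
    conv_rhs => rw [← hu]
    rw [of_apply, coeff_single_mul_apply, one_mul]
  have hpow (n : ℕ) : u.coeff (g⁻¹ ^ n * z) = u.coeff z := by
    induction n with
    | zero => rw [pow_zero, one_mul]
    | succ n ih => rw [pow_succ', mul_assoc, hstep, ih]
  refine Set.infinite_of_injective_forall_mem (f := fun n : ℕ ↦ g⁻¹ ^ n * z) ?_ ?_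
    u.coeff.support.finite_toSet
  · exact (mul_left_injective z).comp
      (injective_pow_iff_not_isOfFinOrder.mpr (by rwa [isOfFinOrder_inv_iff]))
  · intro n
    rw [Finset.mem_coe, Finsupp.mem_support_iff, hpow]
    exact Finsupp.mem_support_iff.mp hz

theorem isLeftRegular_of_sub_of [Ring k] {g h : G} (hgh : ¬IsOfFinOrder (h⁻¹ * g)) :
    IsLeftRegular (of k G g - of k G h) := by
  refine isLeftRegular_of_non_zero_divisor _ fun u hu ↦ eq_zero_of_of_mul_eq_self hgh ?_
  rw [sub_mul, sub_eq_zero] at hu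
  rw [map_mul, mul_assoc, hu, ← mul_assoc, ← map_mul, inv_mul_cancel, map_one, one_mul]

end MonoidAlgebra

namespace KleinGroup

def x : KleinGroup := PresentedGroup.of 0
def y : KleinGroup := PresentedGroup.of 1

theorem y_mul_x : y * x = x⁻¹ * y := by
  have h : y⁻¹ * x * y * x = 1 := PresentedGroup.one_of_mem rfl
  rw [eq_comm, ← inv_mul_eq_one, mul_inv_rev, inv_inv]
  simpa only [mul_assoc] using h

def yDegree : KleinGroup →* Multiplicative ℤ :=
  PresentedGroup.toGroup (f := fun i ↦ if i = 0 then 1 else Multiplicative.ofAdd 1) <| by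
    rintro r rfl
    simp

theorem yDegree_x_mul_y : yDegree (x * y) = Multiplicative.ofAdd 1 := by
  simp [yDegree, x, y, PresentedGroup.toGroup.of]

theorem not_isOfFinOrder_x_mul_y : ¬IsOfFinOrder (x * y) := fun h ↦
  not_isOfFinAddOrder_of_isAddTorsionFree one_ne_zero <| by
    simpa only [yDegree_x_mul_y, isOfFinOrder_ofAdd_iff] using yDegree.isOfFinOrder h

end KleinGroup

namespace LinearMap

variable {R M N P : Type*} [Ring R] [AddCommGroup M] [AddCommGroup N] [AddCommGroup P]
  [Module R M] [Module R N] [Module R P]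

noncomputable def kerCoprodEquivComapRange (f : M →ₗ[R] P) (g : N →ₗ[R] P)
    (hf : Function.Injective f) : ker (f.coprod g) ≃ₗ[R] (range f).comap g :=
  .ofBijective ((snd R M N ∘ₗ (ker (f.coprod g)).subtype).codRestrict _ fun ⟨⟨u, v⟩, huv⟩ ↦ by
      rw [mem_ker, coprod_apply, add_eq_zero_iff_eq_neg] at huv
      exact ⟨-u, by rw [map_neg, huv, neg_neg]; rfl⟩) <| by
    constructor
    · rintro ⟨⟨u, v⟩, huv⟩ ⟨⟨u', v'⟩, huv'⟩ h
      obtain rfl : v = v' := congrArg Subtype.val h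
      rw [mem_ker, coprod_apply, add_eq_zero_iff_eq_neg] at huv huv'
      obtain rfl : u = u' := hf (huv.trans huv'.symm)
      rfl
    · rintro ⟨v, u, hu⟩
      exact ⟨⟨(-u, v), by simp [hu]⟩, rfl⟩

theorem nonempty_comap_range_prod_equiv (f : M →ₗ[R] P) (g : N →ₗ[R] P)
    (hf : Function.Injective f) (s : P →ₗ[R] M × N) (hs : f.coprod g ∘ₗ s = id) :
    Nonempty (((range f).comap g × P) ≃ₗ[R] M × N) := by
  obtain ⟨e, -⟩ := (exact_subtype_ker_map (f.coprod g)).splitSurjectiveEquiv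
    (ker _).injective_subtype ⟨s, hs⟩
  exact ⟨((kerCoprodEquivComapRange f g hf).symm.prodCongr (.refl R P)).trans e.symm⟩

end LinearMap

/- With `y a(x) = a(x⁻¹) y`, the identity splits into the Laurent-polynomial identities `h1` (the
part without `y`) and `h2` (the coefficient of `y`), checked in the commutative subring generated
by `x` and `x⁻¹`. -/
open scoped IsMulCommutative in
theorem klein_bezout {R : Type*} [Ring R] {x x' y : R} (hx : x * x' = 1) (hx' : x' * x = 1)
    (hy : y * x = x' * y) :
    (y - x') * (x ^ 3 + x ^ 2 - x - x ^ 5) + (x ^ 3 - x - 1) * (-x + x' ^ 4 * y - x' ^ 5 * y) =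
      1 := by
  let T := Subring.closure {x, x'}
  have : IsMulCommutative T := Subring.isMulCommutative_closure (by
    simp only [Set.mem_insert_iff, Set.mem_singleton_iff]
    rintro a (rfl | rfl) b (rfl | rfl) <;> simp [hx, hx'])
  let a : T := ⟨x, Subring.subset_closure (by simp)⟩
  let b : T := ⟨x', Subring.subset_closure (by simp)⟩
  have hab : a * b = 1 := Subtype.ext hx
  have h1 : b * (a ^ 3 + a ^ 2 - a - a ^ 5) + (a ^ 3 - a - 1) * a = -1 := by
    linear_combination (a ^ 2 + a - 1 - a ^ 4) * hab
  have h2 : b ^ 3 + b ^ 2 - b - b ^ 5 + (a ^ 3 - a - 1) * (b ^ 4 - b ^ 5) = 0 := by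
    linear_combination ((b - b ^ 2) * (a ^ 2 * b ^ 2 + a * b + 1) + b ^ 4 - b ^ 3) * hab
  have hyA : y * (x ^ 3 + x ^ 2 - x - x ^ 5) = (x' ^ 3 + x' ^ 2 - x' - x' ^ 5) * y := by
    have hyn (n : ℕ) : y * x ^ n = x' ^ n * y := SemiconjBy.pow_right hy n
    simp only [mul_add, mul_sub, add_mul, sub_mul, hy, hyn]
  have h1' := congrArg Subtype.val h1
  have h2' := congrArg Subtype.val h2
  push_cast at h1' h2'
  calc _ = (x' ^ 3 + x' ^ 2 - x' - x' ^ 5 + (x ^ 3 - x - 1) * (x' ^ 4 - x' ^ 5)) * y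
        - (x' * (x ^ 3 + x ^ 2 - x - x ^ 5) + (x ^ 3 - x - 1) * x) := by
          rw [sub_mul, hyA]; noncomm_ring
    _ = 1 := by rw [h1', h2']; simp

open KleinGroup LinearMap

theorem X_mul_Xi : X * Xi = 1 := by
  rw [X, Xi, ← map_mul, mul_inv_cancel, map_one]

theorem Xi_mul_X : Xi * X = 1 := by
  rw [X, Xi, ← map_mul, inv_mul_cancel, map_one]

theorem Y_mul_X : Y * X = Xi * Y := by
  rw [X, Y, Xi, ← map_mul, ← map_mul]
  exact congrArg _ y_mul_x

theorem isLeftRegular_Y_sub_Xi : IsLeftRegular (Y - Xi) :=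
  MonoidAlgebra.isLeftRegular_of_sub_of (by rw [inv_inv]; exact not_isOfFinOrder_x_mul_y)

theorem V_eq_comap_range : V = (range (DistribSMul.toLinearMap Sᵐᵒᵖ S (Y - Xi))).comap
    (DistribSMul.toLinearMap Sᵐᵒᵖ S (X ^ 3 - X - 1)) := by
  ext v
  simp [V, eq_comm]

/-- `V ⊕ S ≅ S²` as right `S`-modules: `V` is stably free of rank 1. -/
theorem stmt_19 : Nonempty ((V × S) ≃ₗ[Sᵐᵒᵖ] (S × S)) := by
  obtain ⟨e⟩ := nonempty_comap_range_prod_equiv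
    (DistribSMul.toLinearMap Sᵐᵒᵖ S (Y - Xi)) (DistribSMul.toLinearMap Sᵐᵒᵖ S (X ^ 3 - X - 1))
    isLeftRegular_Y_sub_Xi
    ((DistribSMul.toLinearMap Sᵐᵒᵖ S (X ^ 3 + X ^ 2 - X - X ^ 5)).prod
      (DistribSMul.toLinearMap Sᵐᵒᵖ S (-X + Xi ^ 4 * Y - Xi ^ 5 * Y))) <| by
    refine LinearMap.ext fun s ↦ ?_
    change (Y - Xi) * (_ * s) + (X ^ 3 - X - 1) * (_ * s) = s
    rw [← mul_assoc, ← mul_assoc, ← add_mul, klein_bezout X_mul_Xi Xi_mul_X Y_mul_X, one_mul]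
  exact ⟨((LinearEquiv.ofEq _ _ V_eq_comap_range).prodCongr (.refl _ _)).trans e⟩
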